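/- arXiv:1708.07620 — 2 statements merged into one kernel-verified Lean document; each statement's English description precedes it below -/
import Mathlib

section
/- Under the SETUP, let r_c ∈ (0,∞) be such that the closed ball B(0, r_c) ⊆ ∩_{i∈V} X_i. Then every minimizer w* of D over S^⊥ satisfies ‖w*‖ ≤ ((Σ_{i∈V} max_{x∈B(0,r_c)} f_i(x)) − F*)/r_c < ∞. -/
noncomputable section

open scoped BigOperators

abbrev Evec (d : ℕ) := EuclideanSpace ℝ (Fin d)
abbrev ENvec (n d : ℕ) := PiLp 2 (fun _ : Fin n => EuclideanSpace ℝ (Fin d))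

/-- Real inner product on `ℝ^d`. -/
def ip {d : ℕ} (x y : Evec d) : ℝ := inner ℝ x y

/-- Real inner product on `ℝ^{nd}`. -/
def ipN {n d : ℕ} (x y : ENvec n d) : ℝ := inner ℝ x y

/-- `g` is a subgradient of `f` at `x`. -/
def IsSubgradientAt {d : ℕ} (f : Evec d → ℝ) (g x : Evec d) : Prop :=
  ∀ y, f x + ip g (y - x) ≤ f y

/-- `f` is strongly convex on `X` with parameter `θ`. -/
def StrongConvexOnWith {d : ℕ} (X : Set (Evec d)) (θ : ℝ) (f : Evec d → ℝ) : Prop :=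
  ∀ x ∈ X, ∀ y ∈ X, ∀ g, IsSubgradientAt f g x →
    θ / 2 * ‖y - x‖ ^ 2 ≤ f y - f x - ip g (y - x)

structure Setup (n d : ℕ) : Type where
  hn : 2 ≤ n
  hd : 1 ≤ d
  X : Fin n → Set (Evec d)
  f : Fin n → Evec d → ℝ
  θ : Fin n → ℝ
  hθ : ∀ i, 0 < θ i
  hXne : ∀ i, (X i).Nonempty
  hXclosed : ∀ i, IsClosed (X i)
  hXconv : ∀ i, Convex ℝ (X i)
  hfconv : ∀ i, ConvexOn ℝ Set.univ (f i)
  hstrong : ∀ i, StrongConvexOnWith (X i) (θ i) (f i)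
  hzero : (0 : Evec d) ∈ interior (⋂ i, X i)
  xt : Fin n → Evec d → Evec d
  hxt_mem : ∀ i w, xt i w ∈ X i
  hxt_max : ∀ i w, ∀ x ∈ X i, ip w x - f i x ≤ ip w (xt i w) - f i (xt i w)
  hxt_uniq : ∀ i w x, x ∈ X i →
    ip w x - f i x = ip w (xt i w) - f i (xt i w) → x = xt i w
  xstar : Evec d
  hxstar_mem : xstar ∈ ⋂ i, X i
  hxstar_min : ∀ x ∈ ⋂ i, X i, (∑ i, f i xstar) ≤ ∑ i, f i x

namespace Setup

variable {n d : ℕ} (P : Setup n d)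

/-- Lipschitz constants `L_i = 1/θ_i`. -/
def Lip (i : Fin n) : ℝ := 1 / P.θ i

/-- `L = max_i L_i`. -/
def Lmax : ℝ := ⨆ i, P.Lip i

/-- The conjugate function `d_i`. -/
def dconj (i : Fin n) (w : Evec d) : ℝ := ip w (P.xt i w) - P.f i (P.xt i w)

/-- The Fenchel dual function `D`. -/
def D (w : ENvec n d) : ℝ := ∑ i, P.dconj i (w i)

/-- The map `x̃ = ∇D`. -/
def xtv (w : ENvec n d) : ENvec n d := WithLp.toLp 2 (fun i => P.xt i (w i))

/-- The primal objective `F`. -/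
def Fobj (x : ENvec n d) : ℝ := ∑ i, P.f i (x i)

/-- The optimal primal value. -/
def Fstar : ℝ := ∑ i, P.f i P.xstar

/-- The primal optimum `𝐱* = (x*, …, x*)`. -/
def xstarv : ENvec n d := WithLp.toLp 2 (fun _ => P.xstar)

end Setup

/-- The subspace `S^⊥ = {w : w_1 + ⋯ + w_n = 0}`. -/
def Sperp (n d : ℕ) : Submodule ℝ (ENvec n d) where
  carrier := {w | ∑ i, w i = 0}
  add_mem' := by
    intro a b ha hb
    simp only [Set.mem_setOf_eq] at ha hb ⊢
    calc ∑ i, (a + b) i = ∑ i, (a i + b i) := rfl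
    _ = (∑ i, a i) + ∑ i, b i := Finset.sum_add_distrib
    _ = 0 := by rw [ha, hb, add_zero]
  zero_mem' := by
    simp only [Set.mem_setOf_eq]
    calc ∑ i, (0 : ENvec n d) i = ∑ _i : Fin n, (0 : Evec d) := rfl
    _ = 0 := by simp
  smul_mem' := by
    intro c a ha
    simp only [Set.mem_setOf_eq] at ha ⊢
    calc ∑ i, (c • a) i = ∑ i, c • a i := rfl
    _ = c • ∑ i, a i := Finset.smul_sum.symm
    _ = 0 := by rw [ha, smul_zero]

/-- Orthogonal projection onto `S^⊥`. -/
def projSperp {n d : ℕ} (x : ENvec n d) : ENvec n d :=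
  ((Sperp n d).orthogonalProjection x : ENvec n d)

namespace Setup

variable {n d : ℕ} (P : Setup n d)

/-- The optimal dual value `D* = min_{w ∈ S^⊥} D(w)`. -/
def Dstar : ℝ := sInf (P.D '' (Sperp n d : Set (ENvec n d)))

end Setup

/-- Block action of `H ⊗ I_d` on `ℝ^{nd}`. -/
def blockMul {n d : ℕ} (H : Matrix (Fin n) (Fin n) ℝ) (w : ENvec n d) : ENvec n d :=
  WithLp.toLp 2 (fun i => ∑ j, H i j • w j)

/-- A time-varying sequence of weighted undirected graphs. -/
structure GraphSeq (n : ℕ) : Type where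
  adj : ℕ → Fin n → Fin n → Bool
  adj_symm : ∀ k i j, adj k i j = adj k j i
  adj_irrefl : ∀ k i, adj k i i = false
  adj_ne : ∀ k, ∃ i j, adj k i j = true
  h : ℕ → Fin n → Fin n → ℝ
  h_symm : ∀ k i j, h k i j = h k j i
  hlow : ℝ
  hhigh : ℝ
  hlow_pos : 0 < hlow
  h_mem : ∀ k i j, adj k i j = true → h k i j ∈ Set.Icc hlow hhigh

namespace GraphSeq

variable {n : ℕ} (Gs : GraphSeq n)

/-- The weight matrix `H_{G^k}`. -/
def H (k : ℕ) : Matrix (Fin n) (Fin n) ℝ :=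
  Matrix.of fun i j =>
    if i = j then ∑ l, (if Gs.adj k i l = true then Gs.h k i l else 0)
    else if Gs.adj k i j = true then -(Gs.h k i j) else 0

end GraphSeq

/-- The Fenchel dual gradient algorithm: step sizes, iterates, and their defining relations. -/
structure Algo (n d : ℕ) (P : Setup n d) (Gs : GraphSeq n) : Type where
  δ : ℝ
  hδ_pos : 0 < δ
  hδ : ∀ k, (δ • Matrix.diagonal (fun i => (P.Lip i)⁻¹) - Gs.H k).PosSemidef
  αlo : ℝ
  αhi : ℝ
  hαlo : 0 < αlo
  hαhi : αhi < 2 / δ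
  α : ℕ → ℝ
  hα : ∀ k, α k ∈ Set.Icc αlo αhi
  w : ℕ → ENvec n d
  hw0 : w 0 ∈ Sperp n d
  hrec : ∀ k, w (k + 1) = w k - α k • blockMul (Gs.H k) (P.xtv (w k))

namespace Algo

variable {n d : ℕ} {P : Setup n d} {Gs : GraphSeq n} (A : Algo n d P Gs)

/-- Primal iterates `x^k = ∇D(w^k)`. -/
def x (k : ℕ) : ENvec n d := P.xtv (A.w k)

/-- The constant `ρ = min{α̲ − α̲²δ/2, ᾱ − ᾱ²δ/2}`. -/
def ρ : ℝ := min (A.αlo - A.αlo ^ 2 * A.δ / 2) (A.αhi - A.αhi ^ 2 * A.δ / 2)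

end Algo

/-! At a minimiser `w*` of `D` on `S^⊥`, the first-order condition `∇D(w*) ∈ (S^⊥)^⊥ = S` says
that all `x̃_i(w*_i)` equal one point `x̄ ∈ ⋂ X_i`, so `D(w*) = -∑ f_i(x̄) ≤ -F*`; the condition is
obtained by letting `t → 0⁺` in `D(w*) ≤ D(w* + t e) ≤ D(w*) + t ⟪e, x̃(w* + t e)⟫`, which needs
continuity of `x̃`, a consequence of strong convexity. On the other hand, evaluating the supremum
defining `d_i` at `r_c w*_i / ‖w*_i‖ ∈ B(0, r_c)` gives `d_i(w*_i) ≥ r_c ‖w*_i‖ - max_B f_i`, and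
`‖w*‖ ≤ ∑ ‖w*_i‖`. -/

open Filter Topology

theorem ConvexOn.exists_le_add_apply_sub {E : Type*} [NormedAddCommGroup E] [NormedSpace ℝ E]
    [FiniteDimensional ℝ E] {f : E → ℝ} (hf : ConvexOn ℝ Set.univ f) (x : E) :
    ∃ φ : E →L[ℝ] ℝ, ∀ y, f x + φ (y - x) ≤ f y := by
  set s : Set (E × ℝ) := {p | p.1 ∈ Set.univ ∧ f p.1 < p.2}
  have hs : IsOpen s := by
    simp only [s, Set.mem_univ, true_and]
    exact isOpen_lt (hf.locallyLipschitz.continuous.comp continuous_fst) continuous_snd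
  obtain ⟨ℓ, hℓ⟩ := geometric_hahn_banach_open_point hf.convex_strict_epigraph hs
    (x := (x, f x)) (by simp)
  set c := -ℓ (0, 1)
  have hsplit : ∀ z t, ℓ (z, t) = ℓ (z, 0) - t * c := fun z t => by
    rw [mul_neg, sub_neg_eq_add, ← smul_eq_mul, ← map_smul, ← map_add]; simp
  have hc : 0 < c := by
    have := hℓ (x, f x + 1) (by simp)
    rw [hsplit x (f x + 1), hsplit x (f x)] at this
    linarith
  refine ⟨c⁻¹ • ℓ.comp (ContinuousLinearMap.inl ℝ E ℝ), fun y => ?_⟩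
  have hsep : ℓ (y - x, 0) ≤ c * (f y - f x) := le_of_forall_pos_lt_add fun ε hε => by
    have := hℓ (y, f y + ε / c) (by simp; positivity)
    rw [hsplit y, hsplit x (f x), add_mul, div_mul_cancel₀ _ hc.ne'] at this
    have hsub : ℓ (y - x, 0) = ℓ (y, 0) - ℓ (x, 0) := by rw [← map_sub]; simp
    linarith
  have : c⁻¹ * ℓ (y - x, 0) ≤ f y - f x := by
    rw [inv_mul_le_iff₀ hc]; exact hsep
  simp only [smul_apply, ContinuousLinearMap.comp_apply,
    ContinuousLinearMap.inl_apply, smul_eq_mul]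
  linarith

theorem PiLp.norm_le_sum_norm {ι : Type*} [Fintype ι] {β : ι → Type*}
    [∀ i, SeminormedAddCommGroup (β i)] (x : PiLp 2 β) : ‖x‖ ≤ ∑ i, ‖x i‖ := by
  refine le_of_pow_le_pow_left₀ two_ne_zero (by positivity) ?_
  rw [PiLp.norm_sq_eq_of_L2]
  exact Finset.sum_sq_le_sq_sum_of_nonneg fun i _ => norm_nonneg _

section StrongConvexity

variable {d : ℕ} {X : Set (Evec d)} {θ : ℝ} {f : Evec d → ℝ}

theorem ConvexOn.exists_isSubgradientAt (hf : ConvexOn ℝ Set.univ f) (x : Evec d) :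
    ∃ g, IsSubgradientAt f g x := by
  obtain ⟨φ, hφ⟩ := hf.exists_le_add_apply_sub x
  exact ⟨(InnerProductSpace.toDual ℝ _).symm φ, fun y => by
    simpa [ip, InnerProductSpace.toDual_symm_apply] using hφ y⟩

theorem StrongConvexOnWith.map_midpoint_le (h : StrongConvexOnWith X θ f)
    (hf : ConvexOn ℝ Set.univ f) (hX : Convex ℝ X) {x y : Evec d} (hx : x ∈ X) (hy : y ∈ X) :
    f (midpoint ℝ x y) ≤ (f x + f y) / 2 - θ / 8 * ‖x - y‖ ^ 2 := by
  obtain ⟨g, hg⟩ := hf.exists_isSubgradientAt (midpoint ℝ x y)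
  have hm : midpoint ℝ x y ∈ X := hX.segment_subset hx hy (midpoint_mem_segment x y)
  have hx' := h _ hm x hx g hg
  have hy' := h _ hm y hy g hg
  have ex : x - midpoint ℝ x y = (2⁻¹ : ℝ) • (x - y) := by
    rw [midpoint_eq_smul_add]; simp only [invOf_eq_inv]; module
  have ey : y - midpoint ℝ x y = -((2⁻¹ : ℝ) • (x - y)) := by
    rw [midpoint_eq_smul_add]; simp only [invOf_eq_inv]; module
  have hnorm : ‖(2⁻¹ : ℝ) • (x - y)‖ ^ 2 = ‖x - y‖ ^ 2 / 4 := by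
    rw [norm_smul]; norm_num; ring
  rw [ex, hnorm, ip] at hx'
  rw [ey, norm_neg, hnorm, ip, inner_neg_right] at hy'
  linarith

theorem StrongConvexOnWith.add_sq_le_of_isMaxOn (h : StrongConvexOnWith X θ f)
    (hf : ConvexOn ℝ Set.univ f) (hX : Convex ℝ X) {w x y : Evec d} (hx : x ∈ X)
    (hmax : IsMaxOn (fun z => ip w z - f z) X x) (hy : y ∈ X) :
    ip w y - f y + θ / 4 * ‖y - x‖ ^ 2 ≤ ip w x - f x := by
  have hmid := h.map_midpoint_le hf hX hx hy
  have hopt : ip w (midpoint ℝ x y) - f (midpoint ℝ x y) ≤ ip w x - f x :=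
    hmax (hX.segment_subset hx hy (midpoint_mem_segment x y))
  have hip : ip w (midpoint ℝ x y) = (ip w x + ip w y) / 2 := by
    simp only [ip, midpoint_eq_smul_add, inner_smul_right, inner_add_right]; norm_num; ring
  rw [hip] at hopt
  rw [norm_sub_rev] at hmid
  linarith

theorem StrongConvexOnWith.norm_sub_le_of_isMaxOn (h : StrongConvexOnWith X θ f)
    (hf : ConvexOn ℝ Set.univ f) (hX : Convex ℝ X) (hθ : 0 < θ) {w w' x x' : Evec d}
    (hx : x ∈ X) (hmax : IsMaxOn (fun z => ip w z - f z) X x)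
    (hx' : x' ∈ X) (hmax' : IsMaxOn (fun z => ip w' z - f z) X x') :
    ‖x - x'‖ ≤ 2 / θ * ‖w - w'‖ := by
  have h₁ := h.add_sq_le_of_isMaxOn hf hX hx hmax hx'
  have h₂ := h.add_sq_le_of_isMaxOn hf hX hx' hmax' hx
  have hmono : θ / 2 * ‖x - x'‖ ^ 2 ≤ ‖w - w'‖ * ‖x - x'‖ := by
    have hip : ip (w - w') (x - x') = ip w x - ip w x' - (ip w' x - ip w' x') := by
      simp only [ip, inner_sub_left, inner_sub_right]; ring
    rw [norm_sub_rev x' x] at h₁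
    calc θ / 2 * ‖x - x'‖ ^ 2 ≤ ip (w - w') (x - x') := by rw [hip]; linarith
      _ ≤ ‖w - w'‖ * ‖x - x'‖ := real_inner_le_norm _ _
  rw [div_mul_eq_mul_div, le_div_iff₀ hθ]
  rcases (norm_nonneg (x - x')).eq_or_lt with h0 | hpos
  · rw [← h0, zero_mul]; positivity
  · nlinarith

end StrongConvexity

theorem eq_of_mem_orthogonal_Sperp {n d : ℕ} {x : ENvec n d} (hx : x ∈ (Sperp n d)ᗮ)
    (i j : Fin n) : x i = x j := by
  set u := x i - x j
  have he : WithLp.toLp 2 (Pi.single i u - Pi.single j u) ∈ Sperp n d := by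
    show ∑ k, (Pi.single i u - Pi.single j u : Fin n → Evec d) k = 0
    simp [Finset.sum_sub_distrib]
  have h := (Submodule.mem_orthogonal _ _).1 hx _ he
  have hsingle : ∀ l,
      ∑ k, inner ℝ ((Pi.single l u : Fin n → Evec d) k) (x k) = inner ℝ u (x l) := fun l => by
      rw [Finset.sum_eq_single l (fun k _ hk => by simp [Pi.single_eq_of_ne hk]) (by simp)]
      simp
  rw [PiLp.inner_apply] at h
  simp only [Pi.sub_apply, inner_sub_left, Finset.sum_sub_distrib, hsingle,
    ← inner_sub_right] at h
  exact sub_eq_zero.1 (inner_self_eq_zero.1 h)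

namespace Setup

variable {n d : ℕ} (P : Setup n d)

theorem continuous_f (i : Fin n) : Continuous (P.f i) :=
  (P.hfconv i).locallyLipschitz.continuous

theorem isMaxOn_xt (i : Fin n) (w : Evec d) :
    IsMaxOn (fun x => ip w x - P.f i x) (P.X i) (P.xt i w) :=
  P.hxt_max i w

theorem lipschitzWith_xt (i : Fin n) : LipschitzWith (2 / P.θ i).toNNReal (P.xt i) :=
  LipschitzWith.of_dist_le_mul fun w w' => by
    rw [dist_eq_norm, dist_eq_norm, Real.coe_toNNReal _ (div_pos two_pos (P.hθ i)).le]
    exact (P.hstrong i).norm_sub_le_of_isMaxOn (P.hfconv i) (P.hXconv i) (P.hθ i)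
      (P.hxt_mem i w) (P.isMaxOn_xt i w) (P.hxt_mem i w') (P.isMaxOn_xt i w')

theorem continuous_xtv : Continuous P.xtv :=
  (PiLp.continuous_toLp 2 _).comp <| continuous_pi fun i =>
    (P.lipschitzWith_xt i).continuous.comp (PiLp.continuous_apply 2 _ i)

theorem dconj_add_le (i : Fin n) (a b : Evec d) :
    P.dconj i (a + b) ≤ P.dconj i a + ip b (P.xt i (a + b)) := by
  have h := P.hxt_max i a _ (P.hxt_mem i (a + b))
  simp only [dconj, ip, inner_add_left] at h ⊢
  linarith

theorem D_add_le (w v : ENvec n d) : P.D (w + v) ≤ P.D w + inner ℝ v (P.xtv (w + v)) := by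
  rw [D, D, PiLp.inner_apply, ← Finset.sum_add_distrib]
  exact Finset.sum_le_sum fun i _ => P.dconj_add_le i (w i) (v i)

theorem mul_norm_sub_sSup_le_dconj (i : Fin n) {r : ℝ} (hr : 0 ≤ r)
    (hball : Metric.closedBall 0 r ⊆ P.X i) (w : Evec d) :
    r * ‖w‖ - sSup (P.f i '' Metric.closedBall 0 r) ≤ P.dconj i w := by
  set x := (r / ‖w‖) • w
  have hx : x ∈ Metric.closedBall 0 r := by
    rw [mem_closedBall_zero_iff, norm_smul, norm_div, norm_norm, Real.norm_of_nonneg hr]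
    rcases eq_or_ne ‖w‖ 0 with h | h
    · simpa [h] using hr
    · rw [div_mul_cancel₀ _ h]
  have hip : ip w x = r * ‖w‖ := by
    rw [ip, inner_smul_right, real_inner_self_eq_norm_sq]
    rcases eq_or_ne ‖w‖ 0 with h | h
    · simp [h]
    · field_simp
  have hfx : P.f i x ≤ sSup (P.f i '' Metric.closedBall 0 r) :=
    le_csSup ((isCompact_closedBall 0 r).bddAbove_image (P.continuous_f i).continuousOn)
      (Set.mem_image_of_mem _ hx)
  have := P.hxt_max i w x (hball hx)
  rw [dconj]
  linarith

variable {P} {w : ENvec n d}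

theorem inner_xtv_nonneg_of_isMinOn (hw : w ∈ Sperp n d)
    (hmin : ∀ v ∈ Sperp n d, P.D w ≤ P.D v) {e : ENvec n d} (he : e ∈ Sperp n d) :
    0 ≤ inner ℝ e (P.xtv w) := by
  have hpos : ∀ t : ℝ, 0 < t → 0 ≤ inner ℝ e (P.xtv (w + t • e)) := fun t ht => by
    have h := (hmin _ (add_mem hw (Submodule.smul_mem _ t he))).trans (P.D_add_le w (t • e))
    rw [inner_smul_left] at h
    exact nonneg_of_mul_nonneg_right (by simpa using h) ht
  have hlim : Tendsto (fun t : ℝ => inner ℝ e (P.xtv (w + t • e))) (𝓝[>] 0)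
      (𝓝 (inner ℝ e (P.xtv w))) := by
    have hc : Continuous fun t : ℝ => inner ℝ e (P.xtv (w + t • e)) :=
      continuous_const.inner (P.continuous_xtv.comp (by fun_prop))
    simpa using (hc.tendsto 0).mono_left nhdsWithin_le_nhds
  exact ge_of_tendsto hlim (eventually_nhdsWithin_of_forall hpos)

theorem xtv_mem_orthogonal_of_isMinOn (hw : w ∈ Sperp n d)
    (hmin : ∀ v ∈ Sperp n d, P.D w ≤ P.D v) : P.xtv w ∈ (Sperp n d)ᗮ :=
  (Submodule.mem_orthogonal _ _).2 fun e he => le_antisymm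
    (by simpa [inner_neg_left] using inner_xtv_nonneg_of_isMinOn hw hmin (neg_mem he))
    (inner_xtv_nonneg_of_isMinOn hw hmin he)

theorem D_le_neg_Fstar_of_isMinOn (hw : w ∈ Sperp n d)
    (hmin : ∀ v ∈ Sperp n d, P.D w ≤ P.D v) : P.D w ≤ -P.Fstar := by
  have i₀ : Fin n := ⟨0, by linarith [P.hn]⟩
  set x := P.xt i₀ (w i₀)
  have hcons : ∀ i, P.xt i (w i) = x := fun i =>
    eq_of_mem_orthogonal_Sperp (xtv_mem_orthogonal_of_isMinOn hw hmin) i i₀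
  have hx : x ∈ ⋂ i, P.X i := Set.mem_iInter.2 fun i => hcons i ▸ P.hxt_mem i (w i)
  have hD : P.D w = ip (∑ i, w i) x - ∑ i, P.f i x := by
    simp only [D, dconj, hcons, ip, sum_inner, Finset.sum_sub_distrib]
  rw [hD, show ∑ i, w i = 0 from hw, ip, inner_zero_left, zero_sub, neg_le_neg_iff]
  exact P.hxstar_min x hx

end Setup

theorem stmt2 {n d : ℕ} (P : Setup n d) (rc : ℝ) (hrc : 0 < rc)
    (hball : Metric.closedBall (0 : Evec d) rc ⊆ ⋂ i, P.X i) :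
    ∀ wstar ∈ Sperp n d, (∀ w ∈ Sperp n d, P.D wstar ≤ P.D w) →
      ‖wstar‖ ≤ ((∑ i, sSup (P.f i '' Metric.closedBall (0 : Evec d) rc)) - P.Fstar) / rc := by
  intro wstar hw hmin
  set M := fun i => sSup (P.f i '' Metric.closedBall (0 : Evec d) rc)
  have hlow : ∀ i, rc * ‖wstar i‖ - M i ≤ P.dconj i (wstar i) := fun i =>
    P.mul_norm_sub_sSup_le_dconj i hrc.le (hball.trans (Set.iInter_subset _ i)) (wstar i)
  have hD := Setup.D_le_neg_Fstar_of_isMinOn hw hmin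
  rw [le_div_iff₀ hrc]
  calc ‖wstar‖ * rc ≤ (∑ i, ‖wstar i‖) * rc := by gcongr; exact PiLp.norm_le_sum_norm wstar
    _ = ∑ i, (rc * ‖wstar i‖ - M i) + ∑ i, M i := by
      rw [Finset.sum_sub_distrib, ← Finset.mul_sum]; ring
    _ ≤ P.D wstar + ∑ i, M i := by gcongr; exact Finset.sum_le_sum fun i _ => hlow i
    _ ≤ (∑ i, M i) - P.Fstar := by linarith
end
end

section
/- Let G be an undirected graph on vertex set {1,…,n} and let L_1,…,L_n > 0. Define the Metropolis weight matrix H ∈ ℝ^{n×n} by H_{ij} = −1/max{deg(i)L_i, deg(j)L_j} if {i,j} is an edge of G, H_{ii} = Σ_{j: {i,j} edge} 1/max{deg(i)L_i, deg(j)L_j}, and H_{ij} = 0 otherwise. Then 2·diag(1/L_1,…,1/L_n) − H is positive semidefinite, i.e., H ⪯ 2 Λ_L^{−1} with Λ_L = diag(L_1,…,L_n). -/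
/-!
The Metropolis matrix is the weighted Laplacian `diag(r) - W` of the symmetric nonnegative weights
`W i j = 1 / max (deg i * L i, deg j * L j)`, whose row sums satisfy `r i ≤ deg i / (deg i * L i)
≤ 1 / L i`. For any such `W`, `xᵀ (diag(r) + W) x = ½ ∑ W i j (x i + x j)²  ≥ 0`, so
`diag(r) - W ⪯ 2 diag(r) ⪯ 2 diag(1 / L)`.
-/

open Matrix SimpleGraph

namespace Matrix

variable {ι : Type*} [Fintype ι] [DecidableEq ι]

theorem dotProduct_diagonal_sum_add_mulVec (W : Matrix ι ι ℝ) (x : ι → ℝ) :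
    x ⬝ᵥ ((diagonal (fun i => ∑ j, W i j) + W) *ᵥ x) = ∑ i, ∑ j, W i j * (x i ^ 2 + x i * x j) := by
  rw [add_mulVec, dotProduct_add, funext (mulVec_diagonal _ x)]
  simp only [mulVec, dotProduct, Finset.mul_sum, Finset.sum_mul, ← Finset.sum_add_distrib]
  refine Finset.sum_congr rfl fun i _ => Finset.sum_congr rfl fun j _ => by ring

theorem posSemidef_diagonal_sum_add_of_nonneg {W : Matrix ι ι ℝ} (hW : W.IsSymm)
    (hW₀ : ∀ i j, 0 ≤ W i j) : (diagonal (fun i => ∑ j, W i j) + W).PosSemidef := by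
  refine .of_dotProduct_mulVec_nonneg
    ((isHermitian_diagonal _).add (isHermitian_iff_isSymm.2 hW)) fun x => ?_
  have hswap : ∑ i, ∑ j, W i j * x j ^ 2 = ∑ i, ∑ j, W i j * x i ^ 2 := by
    rw [Finset.sum_comm]
    simp only [hW.apply]
  have hsquares : 2 * ∑ i, ∑ j, W i j * (x i ^ 2 + x i * x j)
      = ∑ i, ∑ j, W i j * (x i + x j) ^ 2 := by
    have hexpand : ∑ i, ∑ j, W i j * (x i + x j) ^ 2 = ∑ i, ∑ j, W i j * x j ^ 2
        + ∑ i, ∑ j, W i j * (x i ^ 2 + 2 * (x i * x j)) := by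
      simp only [← Finset.sum_add_distrib]
      refine Finset.sum_congr rfl fun i _ => Finset.sum_congr rfl fun j _ => by ring
    rw [hexpand, hswap]
    simp only [Finset.mul_sum, ← Finset.sum_add_distrib]
    refine Finset.sum_congr rfl fun i _ => Finset.sum_congr rfl fun j _ => by ring
  have : 0 ≤ ∑ i, ∑ j, W i j * (x i + x j) ^ 2 :=
    Finset.sum_nonneg fun i _ => Finset.sum_nonneg fun j _ => mul_nonneg (hW₀ i j) (sq_nonneg _)
  rw [star_trivial, dotProduct_diagonal_sum_add_mulVec]
  linarith

theorem posSemidef_two_smul_diagonal_sub_diagonal_sum_sub {W : Matrix ι ι ℝ} (hW : W.IsSymm)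
    (hW₀ : ∀ i j, 0 ≤ W i j) {d : ι → ℝ} (hd : ∀ i, ∑ j, W i j ≤ d i) :
    ((2 : ℝ) • diagonal d - (diagonal (fun i => ∑ j, W i j) - W)).PosSemidef := by
  have hsplit : (2 : ℝ) • diagonal d - (diagonal (fun i => ∑ j, W i j) - W)
      = diagonal (fun i => 2 * (d i - ∑ j, W i j)) + (diagonal (fun i => ∑ j, W i j) + W) := by
    ext i j
    by_cases hij : i = j
    · subst hij
      simp only [sub_apply, smul_apply, diagonal_apply_eq, smul_eq_mul, add_apply]
      ring
    · simp [hij]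
  rw [hsplit]
  exact (PosSemidef.diagonal fun i => by simpa using hd i).add
    (posSemidef_diagonal_sum_add_of_nonneg hW hW₀)

end Matrix

namespace SimpleGraph

variable {V : Type*} [Fintype V] (G : SimpleGraph V) [DecidableRel G.Adj]

noncomputable def metropolisWeights (L : V → ℝ) : Matrix V V ℝ :=
  Matrix.of fun i j => if G.Adj i j then (max (G.degree i * L i) (G.degree j * L j))⁻¹ else 0

variable {G}

theorem isSymm_metropolisWeights (L : V → ℝ) : (G.metropolisWeights L).IsSymm := by
  ext i j
  simp [metropolisWeights, G.adj_comm, max_comm]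

theorem metropolisWeights_nonneg {L : V → ℝ} (hL : ∀ i, 0 ≤ L i) (i j : V) :
    0 ≤ G.metropolisWeights L i j := by
  rw [metropolisWeights, of_apply]
  split_ifs
  · exact inv_nonneg.2 (le_max_of_le_left (by have := hL i; positivity))
  · exact le_rfl

theorem sum_metropolisWeights_le {L : V → ℝ} (hL : ∀ i, 0 < L i) (i : V) :
    ∑ j, G.metropolisWeights L i j ≤ (L i)⁻¹ := by
  have hneighbors : ∑ j, G.metropolisWeights L i j
      = ∑ j ∈ G.neighborFinset i, (max (G.degree i * L i) (G.degree j * L j))⁻¹ := by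
    simp only [metropolisWeights, of_apply, neighborFinset_eq_filter, Finset.sum_filter]
  have hterm : ∀ j ∈ G.neighborFinset i,
      (max (G.degree i * L i) (G.degree j * L j))⁻¹ ≤ (G.degree i * L i)⁻¹ := by
    intro j hj
    have hdeg : (0 : ℝ) < G.degree i := by
      exact_mod_cast (G.degree_pos_iff_exists_adj i).2 ⟨j, (G.mem_neighborFinset i j).1 hj⟩
    exact inv_anti₀ (mul_pos hdeg (hL i)) (le_max_left _ _)
  calc ∑ j, G.metropolisWeights L i j
      ≤ G.degree i • (G.degree i * L i)⁻¹ := hneighbors ▸ Finset.sum_le_card_nsmul _ _ _ hterm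
    _ = (G.degree i * (G.degree i : ℝ)⁻¹) * (L i)⁻¹ := by rw [nsmul_eq_mul, mul_inv, mul_assoc]
    _ ≤ (L i)⁻¹ := mul_le_of_le_one_left (inv_nonneg.2 (hL i).le) mul_inv_le_one

end SimpleGraph

theorem stmt18_general {n : ℕ} (G : SimpleGraph (Fin n)) [DecidableRel G.Adj]
    (L : Fin n → ℝ) (hL : ∀ i, 0 < L i)
    (H : Matrix (Fin n) (Fin n) ℝ)
    (hH : H = Matrix.of fun i j =>
      if i = j then
        ∑ l, (if G.Adj i l then (max ((G.degree i : ℝ) * L i) ((G.degree l : ℝ) * L l))⁻¹ else 0)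
      else if G.Adj i j then -(max ((G.degree i : ℝ) * L i) ((G.degree j : ℝ) * L j))⁻¹ else 0) :
    ((2 : ℝ) • Matrix.diagonal (fun i => (L i)⁻¹) - H).PosSemidef := by
  have hH_laplacian :
      H = diagonal (fun i => ∑ j, G.metropolisWeights L i j) - G.metropolisWeights L := by
    subst hH
    ext i j
    by_cases hij : i = j
    · subst hij; simp [metropolisWeights]
    · simp only [metropolisWeights, Matrix.sub_apply, of_apply, diagonal_apply_ne _ hij, if_neg hij]
      split_ifs <;> simp
  rw [hH_laplacian]
  exact posSemidef_two_smul_diagonal_sub_diagonal_sum_sub (isSymm_metropolisWeights L)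
    (metropolisWeights_nonneg fun i => (hL i).le) (sum_metropolisWeights_le hL)

theorem stmt18 {n : ℕ} (hn : 0 < n) (G : SimpleGraph (Fin n)) [DecidableRel G.Adj]
    (L : Fin n → ℝ) (hL : ∀ i, 0 < L i)
    (H : Matrix (Fin n) (Fin n) ℝ)
    (hH : H = Matrix.of fun i j =>
      if i = j then
        ∑ l, (if G.Adj i l then (max ((G.degree i : ℝ) * L i) ((G.degree l : ℝ) * L l))⁻¹ else 0)
      else if G.Adj i j then -(max ((G.degree i : ℝ) * L i) ((G.degree j : ℝ) * L j))⁻¹ else 0) :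
    ((2 : ℝ) • Matrix.diagonal (fun i => (L i)⁻¹) - H).PosSemidef :=
  stmt18_general G L hL H hH
end
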